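/- arXiv:1605.00858 — 5 statements merged into one kernel-verified Lean document; each statement's English description precedes it below -/
import Mathlib

section
/- Every twice differentiable solution x : ℝ → ℝ of the unforced, undamped Duffing equation x''(t) + x(t) + x(t)³ = 0 with (x(0), x'(0)) ≠ (0, 0) is periodic: there exists T > 0 such that x(t + T) = x(t) and x'(t + T) = x'(t) for all t ∈ ℝ. -/
/-! The velocity `x'` cannot keep a sign forever. If `x' > 0` on `(t₀, ∞)` then `x` increases;
either `x` eventually becomes positive, after which the increasing restoring force drives `x'`
below zero, or `x ≤ 0` throughout, in which case `x'` is nondecreasing and `x` grows linearly.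
So `x'` vanishes at two times `a < b`. By uniqueness for the locally Lipschitz first-order system,
the trajectory is symmetric under time reversal about each zero of `x'`, and composing the
reflections about `a` and `b` gives the period `2 (b - a)`. -/

open Set Filter Function

theorem ODE_solution_unique_univ_of_locallyLipschitz {E : Type*} [NormedAddCommGroup E]
    [NormedSpace ℝ E] {F : E → E} (hF : LocallyLipschitz F) {γ₁ γ₂ : ℝ → E}
    (h₁ : ∀ t, HasDerivAt γ₁ (F (γ₁ t)) t) (h₂ : ∀ t, HasDerivAt γ₂ (F (γ₂ t)) t) {t₀ : ℝ}
    (heq : γ₁ t₀ = γ₂ t₀) : γ₁ = γ₂ := by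
  funext t
  obtain ⟨A, B, ht, ht₀⟩ : ∃ A B, t ∈ Ioo A B ∧ t₀ ∈ Ioo A B :=
    ⟨min t t₀ - 1, max t t₀ + 1, by grind, by grind⟩
  -- both trajectories stay in a compact set, on which `F` is Lipschitz
  set s := γ₁ '' Icc A B ∪ γ₂ '' Icc A B
  have hs : IsCompact s :=
    (isCompact_Icc.image (continuous_iff_continuousAt.2 fun t => (h₁ t).continuousAt)).union
      (isCompact_Icc.image (continuous_iff_continuousAt.2 fun t => (h₂ t).continuousAt))
  obtain ⟨K, hK⟩ := hF.locallyLipschitzOn.exists_lipschitzOnWith_of_compact hs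
  exact ODE_solution_unique_of_mem_Ioo (v := fun _ => F) (s := fun _ => s) (fun _ _ => hK) ht₀
    (fun u hu => ⟨h₁ u, Or.inl (mem_image_of_mem _ (Ioo_subset_Icc_self hu))⟩)
    (fun u hu => ⟨h₂ u, Or.inr (mem_image_of_mem _ (Ioo_subset_Icc_self hu))⟩) heq ht

theorem IsPreconnected.forall_pos_of_ne_zero {α : Type*} [TopologicalSpace α] {s : Set α}
    {g : α → ℝ} (hs : IsPreconnected s) (hg : ContinuousOn g s) (hne : ∀ t ∈ s, g t ≠ 0)
    {a : α} (ha : a ∈ s) (hpos : 0 < g a) : ∀ t ∈ s, 0 < g t := by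
  intro t ht
  by_contra! hle
  obtain ⟨u, hu, hu0⟩ := hs.intermediate_value₂ ht ha hg continuousOn_const hle hpos.le
  exact hne u hu hu0

theorem monotoneOn_Ioi_of_hasDerivAt_nonneg {g g' : ℝ → ℝ} {a : ℝ}
    (hg : ∀ t > a, HasDerivAt g (g' t) t) (hg' : ∀ t > a, 0 ≤ g' t) : MonotoneOn g (Ioi a) := by
  refine monotoneOn_of_hasDerivWithinAt_nonneg (f' := g') (convex_Ioi a)
    (fun t ht => (hg t ht).continuousAt.continuousWithinAt) (fun t ht => ?_) (fun t ht => ?_)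
  · rw [interior_Ioi] at ht ⊢
    exact (hg t ht).hasDerivWithinAt
  · rw [interior_Ioi] at ht
    exact hg' t ht

theorem tendsto_atTop_of_le_hasDerivAt {g g' : ℝ → ℝ} {a c : ℝ} (hc : 0 < c)
    (hg : ∀ t ≥ a, HasDerivAt g (g' t) t) (hg' : ∀ t ≥ a, c ≤ g' t) :
    Tendsto g atTop atTop := by
  have hgrow : ∀ t ≥ a, g a + c * (t - a) ≤ g t := by
    intro t ht
    have := (convex_Ici a).mul_sub_le_image_sub_of_le_deriv
      (fun t ht => (hg t ht).continuousAt.continuousWithinAt)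
      (fun t ht => (hg t (interior_subset ht)).differentiableAt.differentiableWithinAt)
      (fun t ht => (hg t (interior_subset ht)).deriv ▸ hg' t (interior_subset ht))
      a self_mem_Ici t ht ht
    linarith
  refine tendsto_atTop_mono' atTop (eventually_atTop.2 ⟨a, hgrow⟩) ?_
  exact tendsto_atTop_add_const_left _ _
    ((tendsto_id.atTop_add tendsto_const_nhds).const_mul_atTop hc)

/-- Solutions of `x'' + f x = 0`, with `v = x'`. -/
structure IsOscillatorSolution (f x v : ℝ → ℝ) : Prop where
  hasDerivAt_x : ∀ t, HasDerivAt x (v t) t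
  hasDerivAt_v : ∀ t, HasDerivAt v (-f (x t)) t

namespace IsOscillatorSolution

variable {f x v : ℝ → ℝ}

theorem neg (h : IsOscillatorSolution f x v) :
    IsOscillatorSolution (fun y => -f (-y)) (-x) (-v) where
  hasDerivAt_x t := (h.hasDerivAt_x t).neg
  hasDerivAt_v t := by simpa using (h.hasDerivAt_v t).neg

theorem comp_const_sub (h : IsOscillatorSolution f x v) (c : ℝ) :
    IsOscillatorSolution f (fun t => x (c - t)) (fun t => -v (c - t)) where
  hasDerivAt_x t := by simpa using (h.hasDerivAt_x (c - t)).comp_const_sub c t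
  hasDerivAt_v t := by simpa using ((h.hasDerivAt_v (c - t)).comp_const_sub c t).fun_neg

theorem unique (hf : LocallyLipschitz f) {x' v' : ℝ → ℝ} (h : IsOscillatorSolution f x v)
    (h' : IsOscillatorSolution f x' v') {t₀ : ℝ} (hx : x t₀ = x' t₀) (hv : v t₀ = v' t₀) :
    x = x' ∧ v = v' := by
  have hF : LocallyLipschitz fun p : ℝ × ℝ => (p.2, -f p.1) :=
    LipschitzWith.prod_snd.locallyLipschitz.prodMk
      ((hf.comp LipschitzWith.prod_fst.locallyLipschitz).neg)
  have hγ := ODE_solution_unique_univ_of_locallyLipschitz hF (γ₁ := fun t => (x t, v t))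
    (γ₂ := fun t => (x' t, v' t)) (fun t => (h.hasDerivAt_x t).prodMk (h.hasDerivAt_v t))
    (fun t => (h'.hasDerivAt_x t).prodMk (h'.hasDerivAt_v t)) (Prod.ext hx hv)
  exact ⟨funext fun t => congrArg Prod.fst (congrFun hγ t),
    funext fun t => congrArg Prod.snd (congrFun hγ t)⟩

theorem not_forall_gt_vel_pos (h : IsOscillatorSolution f x v) (hf : StrictMono f)
    (hf0 : f 0 = 0) (t₀ : ℝ) : ¬ ∀ t > t₀, 0 < v t := by
  intro hv
  have hx_mono : MonotoneOn x (Ioi t₀) :=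
    monotoneOn_Ioi_of_hasDerivAt_nonneg (fun t _ => h.hasDerivAt_x t) fun t ht => (hv t ht).le
  by_cases hx : ∃ t₁ > t₀, 0 < x t₁
  · obtain ⟨t₁, ht₁, hx₁⟩ := hx
    have hf₁ : 0 < f (x t₁) := hf0 ▸ hf hx₁
    have hv_top : Tendsto (-v) atTop atTop :=
      tendsto_atTop_of_le_hasDerivAt hf₁ (fun t _ => (h.hasDerivAt_v t).neg) fun t ht =>
        by simpa using hf.monotone (hx_mono ht₁ (lt_of_lt_of_le ht₁ ht) ht)
    obtain ⟨t, ht, hneg⟩ := ((eventually_gt_atTop t₀).and (hv_top.eventually_gt_atTop 0)).exists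
    exact (neg_pos.1 hneg).not_gt (hv t ht)
  · push Not at hx
    have hv_mono : MonotoneOn v (Ioi t₀) :=
      monotoneOn_Ioi_of_hasDerivAt_nonneg (fun t _ => h.hasDerivAt_v t) fun t ht =>
        neg_nonneg.2 (hf0 ▸ hf.monotone (hx t ht))
    have ht₁ : t₀ < t₀ + 1 := lt_add_one t₀
    have hx_top : Tendsto x atTop atTop :=
      tendsto_atTop_of_le_hasDerivAt (hv _ ht₁) (fun t _ => h.hasDerivAt_x t) fun t ht =>
        hv_mono ht₁ (lt_of_lt_of_le ht₁ ht) ht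
    obtain ⟨t, ht, hpos⟩ := ((eventually_gt_atTop t₀).and (hx_top.eventually_gt_atTop 0)).exists
    exact (hx t ht).not_gt hpos

theorem exists_gt_vel_eq_zero (h : IsOscillatorSolution f x v) (hf : StrictMono f)
    (hf0 : f 0 = 0) (t₀ : ℝ) : ∃ a > t₀, v a = 0 := by
  by_contra! hne
  have hv : Continuous v :=
    continuous_iff_continuousAt.2 fun t => (h.hasDerivAt_v t).continuousAt
  have ht₁ : t₀ + 1 ∈ Ioi t₀ := lt_add_one t₀
  rcases (hne _ ht₁).lt_or_gt with hneg | hpos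
  · exact h.neg.not_forall_gt_vel_pos (fun a b hab => neg_lt_neg (hf (neg_lt_neg hab)))
      (by simp [hf0]) t₀ (isPreconnected_Ioi.forall_pos_of_ne_zero hv.neg.continuousOn
        (fun t ht => neg_ne_zero.2 (hne t ht)) ht₁ (neg_pos.2 hneg))
  · exact h.not_forall_gt_vel_pos hf hf0 t₀
      (isPreconnected_Ioi.forall_pos_of_ne_zero hv.continuousOn hne ht₁ hpos)

theorem reflect_of_vel_eq_zero (h : IsOscillatorSolution f x v) (hf : LocallyLipschitz f)
    {a : ℝ} (ha : v a = 0) : (fun t => x (2 * a - t)) = x ∧ (fun t => -v (2 * a - t)) = v :=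
  (h.comp_const_sub (2 * a)).unique hf h (t₀ := a) (by ring_nf) (by simp [two_mul, ha])

theorem exists_periodic (h : IsOscillatorSolution f x v) (hf : StrictMono f) (hf0 : f 0 = 0)
    (hfl : LocallyLipschitz f) : ∃ T > 0, Periodic x T ∧ Periodic v T := by
  obtain ⟨a, -, ha⟩ := h.exists_gt_vel_eq_zero hf hf0 0
  obtain ⟨b, hab, hb⟩ := h.exists_gt_vel_eq_zero hf hf0 a
  obtain ⟨hxa, hva⟩ := h.reflect_of_vel_eq_zero hfl ha
  obtain ⟨hxb, hvb⟩ := h.reflect_of_vel_eq_zero hfl hb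
  have hshift (t : ℝ) : 2 * b - (t + 2 * (b - a)) = 2 * a - t := by ring
  refine ⟨2 * (b - a), by linarith, fun t => ?_, fun t => ?_⟩
  · calc x (t + 2 * (b - a)) = x (2 * b - (t + 2 * (b - a))) := (congrFun hxb _).symm
      _ = x t := by rw [hshift]; exact congrFun hxa t
  · calc v (t + 2 * (b - a)) = -v (2 * b - (t + 2 * (b - a))) := (congrFun hvb _).symm
      _ = v t := by rw [hshift]; exact congrFun hva t

end IsOscillatorSolution

theorem duffing_unforced_periodic_general (x : ℝ → ℝ)
    (hx1 : ∀ t, DifferentiableAt ℝ x t)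
    (hx2 : ∀ t, DifferentiableAt ℝ (deriv x) t)
    (hode : ∀ t, deriv (deriv x) t + x t + (x t) ^ 3 = 0) :
    ∃ T > 0, ∀ t : ℝ, x (t + T) = x t ∧ deriv x (t + T) = deriv x t := by
  have hsol : IsOscillatorSolution (fun y => y + y ^ 3) x (deriv x) :=
    ⟨fun t => (hx1 t).hasDerivAt,
      fun t => (hx2 t).hasDerivAt.congr_deriv (by linarith [hode t])⟩
  have hmono : StrictMono fun y : ℝ => y + y ^ 3 :=
    strictMono_id.add (Odd.strictMono_pow (by decide))
  have hlip : LocallyLipschitz fun y : ℝ => y + y ^ 3 :=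
    ContDiff.locallyLipschitz (𝕂 := ℝ) (by fun_prop)
  obtain ⟨T, hT, hxT, hvT⟩ := hsol.exists_periodic hmono (by norm_num) hlip
  exact ⟨T, hT, fun t => ⟨hxT t, hvT t⟩⟩

/-- Every twice differentiable solution of the unforced, undamped Duffing
equation `x'' + x + x³ = 0` with `(x(0), x'(0)) ≠ (0, 0)` is periodic: there exists `T > 0`
with `x(t + T) = x(t)` and `x'(t + T) = x'(t)` for all `t`. -/
theorem duffing_unforced_periodic (x : ℝ → ℝ)
    (hx1 : ∀ t, DifferentiableAt ℝ x t)
    (hx2 : ∀ t, DifferentiableAt ℝ (deriv x) t)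
    (hode : ∀ t, deriv (deriv x) t + x t + (x t) ^ 3 = 0)
    (hnz : (x 0, deriv x 0) ≠ (0, 0)) :
    ∃ T > 0, ∀ t : ℝ, x (t + T) = x t ∧ deriv x (t + T) = deriv x t :=
  duffing_unforced_periodic_general x hx1 hx2 hode
end

section
/- The function T : (0, ∞) → ℝ defined by T(a) = 4 ∫₀¹ ds / √((1 − s²) + (a²/2)(1 − s⁴)) is strictly decreasing. Consequently the natural frequency 2π/T(a) of the unforced, undamped Duffing oscillator is a strictly increasing function of the oscillation amplitude a (hardening spring). -/
/-!
Write `c = a²/2`. For each `s ∈ (0, 1)` the radicand `(1 - s²) + c (1 - s⁴)` is strictly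
increasing in `c`, so the integrand is strictly decreasing in `c`. For `c ≥ 0` the radicand is at
least `1 - s`, so the integrand is dominated by the integrable `(1 - s)^(-1/2)`; hence the
integrals are finite, positive and strictly decreasing in `c`, and `2π / T` is strictly increasing.
-/

open Real Set MeasureTheory

theorem intervalIntegrable_one_div_sqrt_of_one_sub_le {g : ℝ → ℝ} (hg : Measurable g)
    (hle : ∀ s ∈ Ioo (0:ℝ) 1, 1 - s ≤ g s) :
    IntervalIntegrable (fun s => 1 / √(g s)) volume 0 1 := by
  have hmajorant : IntegrableOn (fun s : ℝ => (1 - s) ^ (-(1/2) : ℝ)) (Ioo 0 1) := by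
    have h := (intervalIntegral.intervalIntegrable_rpow' (a := 0) (b := 1) (r := -(1/2))
      (by norm_num)).comp_sub_left 1
    rw [sub_zero, sub_self] at h
    exact (intervalIntegrable_iff_integrableOn_Ioo_of_le zero_le_one).mp h.symm
  rw [intervalIntegrable_iff_integrableOn_Ioo_of_le zero_le_one]
  refine hmajorant.mono' (by fun_prop : Measurable fun s => 1 / √(g s)).aestronglyMeasurable
    (ae_restrict_of_forall_mem measurableSet_Ioo fun s hs => ?_)
  have hpos : 0 < 1 - s := sub_pos.mpr hs.2
  rw [norm_of_nonneg (by positivity), rpow_neg hpos.le, ← sqrt_eq_rpow, ← one_div]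
  gcongr
  exact hle s hs

/-- The parameter `c` stands for `a² / 2`. -/
noncomputable def periodRadicand (c s : ℝ) : ℝ := (1 - s ^ 2) + c * (1 - s ^ 4)

noncomputable def periodIntegrand (c s : ℝ) : ℝ := 1 / √(periodRadicand c s)

lemma one_sub_le_periodRadicand {c s : ℝ} (hc : 0 ≤ c) (hs : s ∈ Icc (0:ℝ) 1) :
    1 - s ≤ periodRadicand c s := by
  obtain ⟨hs0, hs1⟩ := hs
  have h4 : 0 ≤ 1 - s ^ 4 := by nlinarith [pow_le_one₀ hs0 hs1 (n := 4)]
  unfold periodRadicand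
  nlinarith [mul_nonneg hc h4]

lemma periodRadicand_pos {c s : ℝ} (hc : 0 ≤ c) (hs : s ∈ Ioo (0:ℝ) 1) :
    0 < periodRadicand c s :=
  (sub_pos.mpr hs.2).trans_le (one_sub_le_periodRadicand hc (Ioo_subset_Icc_self hs))

lemma periodRadicand_lt {c d s : ℝ} (hcd : c < d) (hs : s ∈ Ioo (0:ℝ) 1) :
    periodRadicand c s < periodRadicand d s := by
  have h4 : 0 < 1 - s ^ 4 := by nlinarith [pow_lt_one₀ hs.1.le hs.2 (n := 4) (by norm_num)]
  unfold periodRadicand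
  gcongr

lemma intervalIntegrable_periodIntegrand {c : ℝ} (hc : 0 ≤ c) :
    IntervalIntegrable (periodIntegrand c) volume 0 1 :=
  intervalIntegrable_one_div_sqrt_of_one_sub_le (by unfold periodRadicand; fun_prop) fun _ hs =>
    one_sub_le_periodRadicand hc (Ioo_subset_Icc_self hs)

lemma periodIntegrand_pos {c s : ℝ} (hc : 0 ≤ c) (hs : s ∈ Ioo (0:ℝ) 1) :
    0 < periodIntegrand c s := by
  have := periodRadicand_pos hc hs
  unfold periodIntegrand
  positivity

lemma periodIntegrand_lt {c d s : ℝ} (hc : 0 ≤ c) (hcd : c < d) (hs : s ∈ Ioo (0:ℝ) 1) :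
    periodIntegrand d s < periodIntegrand c s := by
  have := periodRadicand_pos hc hs
  have := periodRadicand_lt hcd hs
  unfold periodIntegrand
  gcongr

lemma integral_periodIntegrand_pos {c : ℝ} (hc : 0 ≤ c) :
    0 < ∫ s in (0:ℝ)..1, periodIntegrand c s :=
  intervalIntegral.intervalIntegral_pos_of_pos_on (intervalIntegrable_periodIntegrand hc)
    (fun _ hs => periodIntegrand_pos hc hs) zero_lt_one

lemma strictAntiOn_integral_periodIntegrand :
    StrictAntiOn (fun c => ∫ s in (0:ℝ)..1, periodIntegrand c s) (Ici 0) := by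
  intro c hc d hd hcd
  have hIc := intervalIntegrable_periodIntegrand hc
  have hId := intervalIntegrable_periodIntegrand hd
  have hdiff : 0 < ∫ s in (0:ℝ)..1, (periodIntegrand c s - periodIntegrand d s) :=
    intervalIntegral.intervalIntegral_pos_of_pos_on (hIc.sub hId)
      (fun s hs => sub_pos.mpr (periodIntegrand_lt hc hcd hs)) zero_lt_one
  rw [intervalIntegral.integral_sub hIc hId] at hdiff
  exact sub_pos.mp hdiff

/-- The amplitude-dependent natural period
`T(a) = 4 ∫₀¹ ds / √((1 − s²) + (a²/2)(1 − s⁴))` of the unforced, undamped Duffing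
oscillator is strictly decreasing on `(0, ∞)`; consequently the natural frequency
`2π/T(a)` is strictly increasing in the amplitude `a` (hardening spring). -/
theorem duffing_period_strictAnti :
    let T : ℝ → ℝ := fun a =>
      4 * ∫ s in (0:ℝ)..1, 1 / Real.sqrt ((1 - s ^ 2) + (a ^ 2 / 2) * (1 - s ^ 4))
    StrictAntiOn T (Ioi 0) ∧ StrictMonoOn (fun a => 2 * π / T a) (Ioi 0) := by
  intro T
  have hT : ∀ a, T a = 4 * ∫ s in (0:ℝ)..1, periodIntegrand (a ^ 2 / 2) s := fun _ => rfl
  have hT_pos : ∀ a, 0 < T a := fun a => by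
    rw [hT]
    exact mul_pos four_pos (integral_periodIntegrand_pos (by positivity))
  have hT_anti : StrictAntiOn T (Ioi 0) := by
    intro a ha b hb hab
    have hsq : a ^ 2 / 2 < b ^ 2 / 2 := by have := ha.out.le; gcongr
    rw [hT, hT]
    exact mul_lt_mul_of_pos_left (strictAntiOn_integral_periodIntegrand
      (by positivity : (0:ℝ) ≤ a ^ 2 / 2) (by positivity : (0:ℝ) ≤ b ^ 2 / 2) hsq) four_pos
  exact ⟨hT_anti, fun a ha b hb hab =>
    div_lt_div_of_pos_left (by positivity) (hT_pos b) (hT_anti ha hb hab)⟩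
end

section
/- The natural frequency function ν : (0, ∞) → ℝ, ν(a) = 2π/T(a) with T(a) = 4 ∫₀¹ ds / √((1 − s²) + (a²/2)(1 − s⁴)), is a continuous strictly increasing bijection from (0, ∞) onto (1, ∞). In particular, for every integer k ≥ 1 and every ω > 0 with kω > 1 there exists a unique amplitude a > 0 satisfying the subharmonic resonance condition ω = ν(a)/k. -/
/-!
Since `1 - s⁴ = (1 - s²)(1 + s²)`, the integrand of `T(a)/4` is the arcsine density
`1/√(1 - s²)` times the factor `(1 + a²(1 + s²)/2)^(-1/2)`, which lies in `(0, 1]`, depends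
continuously on `a` and strictly decreases in `|a|`. Hence `T/4` is continuous (dominated
convergence), strictly decreasing on `[0, ∞)`, equal to `π/2` at `0` and at most
`(π/2)/√(1 + a²/2)`. So `ν = π/(2 · T/4)` increases continuously from `ν(0) = 1` with
`ν(a) ≥ √(1 + a²/2)`, and the intermediate value theorem gives surjectivity onto `(1, ∞)`.
-/

open Real Set MeasureTheory intervalIntegral

lemma intervalIntegrable_one_div_sqrt_one_sub_sq :
    IntervalIntegrable (fun s : ℝ => 1 / √(1 - s ^ 2)) volume 0 1 := by
  refine intervalIntegrable_deriv_of_nonneg (g := arcsin) continuous_arcsin.continuousOn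
    (fun x hx => ?_) (fun x _ => by positivity)
  rw [min_eq_left zero_le_one, max_eq_right zero_le_one] at hx
  exact hasDerivAt_arcsin (by linarith [hx.1]) hx.2.ne

lemma one_div_sqrt_one_sub_sq_pos {s : ℝ} (hs : s ∈ Ioo (0:ℝ) 1) :
    0 < 1 / √(1 - s ^ 2) := by
  have : 0 < 1 - s ^ 2 := by nlinarith [hs.1, hs.2]
  positivity

lemma integral_one_div_sqrt_one_sub_sq : ∫ s in (0:ℝ)..1, 1 / √(1 - s ^ 2) = π / 2 := by
  rw [integral_eq_sub_of_hasDerivAt_of_le zero_le_one continuous_arcsin.continuousOn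
    (fun x hx => hasDerivAt_arcsin (by linarith [hx.1]) hx.2.ne)
    intervalIntegrable_one_div_sqrt_one_sub_sq]
  simp

lemma Set.BijOn.existsUnique_eq_div {α : Type*} {f : α → ℝ} {s : Set α} {t : Set ℝ}
    (h : BijOn f s t) {k ω : ℝ} (hk : k ≠ 0) (hω : k * ω ∈ t) :
    ∃! a, a ∈ s ∧ ω = f a / k := by
  obtain ⟨a, ha, hfa⟩ := h.surjOn hω
  refine ⟨a, ⟨ha, by rw [hfa]; field_simp⟩, fun b ⟨hb, hωb⟩ => h.injOn hb ha ?_⟩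
  rw [hfa, hωb]; field_simp

namespace Duffing

noncomputable def stiffeningFactor (a s : ℝ) : ℝ := 1 / √(1 + a ^ 2 / 2 * (1 + s ^ 2))

lemma one_div_sqrt_energy_eq (a s : ℝ) :
    1 / √((1 - s ^ 2) + (a ^ 2 / 2) * (1 - s ^ 4)) =
      1 / √(1 - s ^ 2) * stiffeningFactor a s := by
  have : (1 - s ^ 2) + (a ^ 2 / 2) * (1 - s ^ 4) =
      (1 - s ^ 2) * (1 + a ^ 2 / 2 * (1 + s ^ 2)) := by
    ring
  rw [this, sqrt_mul' _ (by positivity), stiffeningFactor, one_div_mul_one_div]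

lemma stiffeningFactor_pos (a s : ℝ) : 0 < stiffeningFactor a s := by
  unfold stiffeningFactor; positivity

lemma stiffeningFactor_zero_left (s : ℝ) : stiffeningFactor 0 s = 1 := by
  simp [stiffeningFactor]

lemma stiffeningFactor_le (a s : ℝ) : stiffeningFactor a s ≤ 1 / √(1 + a ^ 2 / 2) := by
  unfold stiffeningFactor
  gcongr
  nlinarith [mul_nonneg (sq_nonneg a) (sq_nonneg s)]

lemma stiffeningFactor_le_one (a s : ℝ) : stiffeningFactor a s ≤ 1 := by
  refine (stiffeningFactor_le a s).trans ?_
  rw [div_le_one (by positivity), one_le_sqrt]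
  exact le_add_of_nonneg_right (by positivity)

lemma stiffeningFactor_lt_of_sq_lt {a b : ℝ} (h : a ^ 2 < b ^ 2) (s : ℝ) :
    stiffeningFactor b s < stiffeningFactor a s := by
  unfold stiffeningFactor
  gcongr

lemma continuous_stiffeningFactor : Continuous (Function.uncurry stiffeningFactor) :=
  continuous_const.div (by fun_prop) fun p => (sqrt_pos.2 (by positivity)).ne'

noncomputable def quarterPeriod (a : ℝ) : ℝ :=
  ∫ s in (0:ℝ)..1, 1 / √((1 - s ^ 2) + (a ^ 2 / 2) * (1 - s ^ 4))

lemma quarterPeriod_eq (a : ℝ) :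
    quarterPeriod a = ∫ s in (0:ℝ)..1, 1 / √(1 - s ^ 2) * stiffeningFactor a s := by
  simp only [quarterPeriod, one_div_sqrt_energy_eq]

lemma intervalIntegrable_mul_stiffeningFactor (a : ℝ) :
    IntervalIntegrable (fun s => 1 / √(1 - s ^ 2) * stiffeningFactor a s) volume 0 1 :=
  intervalIntegrable_one_div_sqrt_one_sub_sq.mul_continuousOn
    (continuous_stiffeningFactor.uncurry_left a).continuousOn

lemma quarterPeriod_zero : quarterPeriod 0 = π / 2 := by
  simp only [quarterPeriod_eq, stiffeningFactor_zero_left, mul_one,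
    integral_one_div_sqrt_one_sub_sq]

lemma quarterPeriod_pos (a : ℝ) : 0 < quarterPeriod a := by
  rw [quarterPeriod_eq]
  exact intervalIntegral_pos_of_pos_on (intervalIntegrable_mul_stiffeningFactor a)
    (fun s hs => mul_pos (one_div_sqrt_one_sub_sq_pos hs) (stiffeningFactor_pos a s)) zero_lt_one

lemma quarterPeriod_strictAntiOn : StrictAntiOn quarterPeriod (Ici 0) := by
  intro a ha b _ hab
  have hsq : a ^ 2 < b ^ 2 := by nlinarith [mem_Ici.1 ha]
  rw [quarterPeriod_eq, quarterPeriod_eq, ← sub_pos, ← integral_sub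
    (intervalIntegrable_mul_stiffeningFactor a) (intervalIntegrable_mul_stiffeningFactor b)]
  refine intervalIntegral_pos_of_pos_on ((intervalIntegrable_mul_stiffeningFactor a).sub
    (intervalIntegrable_mul_stiffeningFactor b)) (fun s hs => ?_) zero_lt_one
  rw [← mul_sub]
  exact mul_pos (one_div_sqrt_one_sub_sq_pos hs)
    (sub_pos.2 (stiffeningFactor_lt_of_sq_lt hsq s))

lemma continuous_quarterPeriod : Continuous quarterPeriod := by
  simp only [funext quarterPeriod_eq]
  refine continuous_of_dominated_interval (bound := fun s => 1 / √(1 - s ^ 2))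
    (fun a => (intervalIntegrable_mul_stiffeningFactor a).def'.aestronglyMeasurable)
    (fun a => Filter.Eventually.of_forall fun s _ => ?_)
    intervalIntegrable_one_div_sqrt_one_sub_sq
    (Filter.Eventually.of_forall fun s _ =>
      continuous_const.mul (continuous_stiffeningFactor.uncurry_right s))
  rw [norm_mul, Real.norm_of_nonneg (by positivity),
    Real.norm_of_nonneg (stiffeningFactor_pos a s).le]
  exact mul_le_of_le_one_right (by positivity) (stiffeningFactor_le_one a s)

lemma quarterPeriod_le (a : ℝ) : quarterPeriod a ≤ π / 2 * (1 / √(1 + a ^ 2 / 2)) := by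
  rw [quarterPeriod_eq, ← integral_one_div_sqrt_one_sub_sq,
    ← intervalIntegral.integral_mul_const]
  exact integral_mono_on zero_le_one (intervalIntegrable_mul_stiffeningFactor a)
    (intervalIntegrable_one_div_sqrt_one_sub_sq.mul_const _)
    (fun s _ => mul_le_mul_of_nonneg_left (stiffeningFactor_le a s) (by positivity))

noncomputable def naturalFrequency (a : ℝ) : ℝ := 2 * π / (4 * quarterPeriod a)

lemma naturalFrequency_eq (a : ℝ) : naturalFrequency a = π / 2 / quarterPeriod a := by
  rw [naturalFrequency]; ring

lemma naturalFrequency_zero : naturalFrequency 0 = 1 := by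
  rw [naturalFrequency_eq, quarterPeriod_zero, div_self (by positivity)]

lemma continuous_naturalFrequency : Continuous naturalFrequency :=
  continuous_const.div (continuous_const.mul continuous_quarterPeriod)
    fun a => (mul_pos four_pos (quarterPeriod_pos a)).ne'

lemma naturalFrequency_strictMonoOn : StrictMonoOn naturalFrequency (Ici 0) := by
  intro a ha b hb hab
  simp only [naturalFrequency_eq]
  exact div_lt_div_of_pos_left (by positivity) (quarterPeriod_pos b)
    (quarterPeriod_strictAntiOn ha hb hab)

lemma sqrt_le_naturalFrequency (a : ℝ) : √(1 + a ^ 2 / 2) ≤ naturalFrequency a := by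
  rw [naturalFrequency_eq, le_div_iff₀ (quarterPeriod_pos a)]
  calc √(1 + a ^ 2 / 2) * quarterPeriod a
      ≤ √(1 + a ^ 2 / 2) * (π / 2 * (1 / √(1 + a ^ 2 / 2))) := by
        gcongr; exact quarterPeriod_le a
    _ = π / 2 := by field_simp

lemma bijOn_naturalFrequency : BijOn naturalFrequency (Ioi 0) (Ioi 1) := by
  have hmono := naturalFrequency_strictMonoOn.mono Ioi_subset_Ici_self
  refine ⟨fun a ha => ?_, hmono.injOn, fun y hy => ?_⟩
  · rw [mem_Ioi, ← naturalFrequency_zero]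
    exact naturalFrequency_strictMonoOn self_mem_Ici (mem_Ici.2 (le_of_lt ha)) ha
  · have hy : 1 < y := hy
    have hA : y < naturalFrequency (2 * y) := by
      refine lt_of_lt_of_le ((lt_sqrt (by linarith)).2 ?_) (sqrt_le_naturalFrequency _)
      nlinarith
    obtain ⟨a, ha, rfl⟩ := intermediate_value_Ioo (by linarith : (0:ℝ) ≤ 2 * y)
      continuous_naturalFrequency.continuousOn ⟨naturalFrequency_zero ▸ hy, hA⟩
    exact ⟨a, ha.1, rfl⟩

end Duffing

open Duffing

/-- The natural frequency `ν(a) = 2π/T(a)`, with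
`T(a) = 4 ∫₀¹ ds / √((1 − s²) + (a²/2)(1 − s⁴))`, is a continuous strictly increasing
bijection from `(0, ∞)` onto `(1, ∞)`; in particular, for every integer `k ≥ 1` and every
`ω > 0` with `kω > 1` there exists a unique amplitude `a > 0` satisfying the subharmonic
resonance condition `ω = ν(a)/k`. -/
theorem duffing_natural_frequency_bijection :
    let T : ℝ → ℝ := fun a =>
      4 * ∫ s in (0:ℝ)..1, 1 / Real.sqrt ((1 - s ^ 2) + (a ^ 2 / 2) * (1 - s ^ 4))
    let ν : ℝ → ℝ := fun a => 2 * π / T a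
    ContinuousOn ν (Ioi 0) ∧ StrictMonoOn ν (Ioi 0) ∧ BijOn ν (Ioi 0) (Ioi 1) ∧
      ∀ k : ℕ, 1 ≤ k → ∀ ω : ℝ, 0 < ω → 1 < (k : ℝ) * ω →
        ∃! a : ℝ, 0 < a ∧ ω = ν a / k := by
  intro T ν
  refine ⟨continuous_naturalFrequency.continuousOn,
    naturalFrequency_strictMonoOn.mono Ioi_subset_Ici_self, bijOn_naturalFrequency,
    fun k hk ω _ hkω => ?_⟩
  exact bijOn_naturalFrequency.existsUnique_eq_div (Nat.cast_ne_zero.2 (by omega)) hkω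
end

section
/- Let γ > 0, A ∈ ℝ, ω > 0. For every initial condition (x₀, v₀) ∈ ℝ² there is a unique twice differentiable solution x : [0, ∞) → ℝ of x''(t) + γ x'(t) + x(t) + x(t)³ = A cos(ω t) with x(0) = x₀, x'(0) = v₀, and this solution is bounded: sup_{t ≥ 0} (|x(t)| + |x'(t)|) < ∞. (The damped, forced Duffing oscillator exhibits no finite-time blowup and all trajectories remain bounded.) -/
/-!
With `W(x, v) = v²/2 + x²/2 + x⁴/4 + ε x v` and `ε = γ / (4 (1 + γ²))`, Young's inequality gives
`W' ≤ -(ε/2) W + C` along every solution, so each sublevel set `{W ≤ B}` with `B > 2C/ε` is forward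
invariant, and on it `|x|, |v| ≤ √(4B)`. Clamping the state to the square `[-√(4B), √(4B)]²` makes
the vector field globally Lipschitz and bounded, so Picard–Lindelöf on growing intervals, glued by
uniqueness, yields a global solution of the clamped system. It never leaves `{W ≤ B}`, where the
clamp does nothing, so it solves the Duffing equation; uniqueness holds because the field is
Lipschitz on the square, which every solution stays in.
-/

open Real Set Filter Topology Metric
open scoped NNReal

section GlobalSolutions

variable {E : Type*} [NormedAddCommGroup E] [NormedSpace ℝ E]

theorem HasDerivWithinAt.mono_Ici_of_Icc {f : ℝ → E} {f' : E} {a b t : ℝ}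
    (h : HasDerivWithinAt f f' (Icc a b) t) (ht : t ∈ Ico a b) :
    HasDerivWithinAt f f' (Ici t) t :=
  h.mono_of_mem_nhdsWithin (Icc_mem_nhdsGE_of_mem ht)

theorem ODE_solution_unique_Icc_of_le {v : ℝ → E → E} {K : ℝ≥0} (hv : ∀ t, LipschitzWith K (v t))
    {f g : ℝ → E} {a b b' : ℝ}
    (hf : ∀ t ∈ Icc a b, HasDerivWithinAt f (v t (f t)) (Icc a b) t)
    (hg : ∀ t ∈ Icc a b', HasDerivWithinAt g (v t (g t)) (Icc a b') t)
    (hbb' : b ≤ b') (ha : f a = g a) :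
    EqOn f g (Icc a b) := by
  have hsub : Icc a b ⊆ Icc a b' := Icc_subset_Icc_right hbb'
  exact ODE_solution_unique hv (fun t ht => (hf t ht).continuousWithinAt)
    (fun t ht => (hf t (Ico_subset_Icc_self ht)).mono_Ici_of_Icc ht)
    (fun t ht => ((hg t (hsub ht)).continuousWithinAt).mono hsub)
    (fun t ht => (hg t (hsub (Ico_subset_Icc_self ht))).mono_Ici_of_Icc
      ⟨ht.1, ht.2.trans_le hbb'⟩) ha

theorem ODE_solution_unique_of_mem_Ici {v : ℝ → E → E} {s : Set E} {K : ℝ≥0}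
    (hv : ∀ t, LipschitzOnWith K (v t) s) {f g : ℝ → E} {a : ℝ}
    (hf : ∀ t ∈ Ici a, HasDerivWithinAt f (v t (f t)) (Ici a) t) (hfs : ∀ t ∈ Ici a, f t ∈ s)
    (hg : ∀ t ∈ Ici a, HasDerivWithinAt g (v t (g t)) (Ici a) t) (hgs : ∀ t ∈ Ici a, g t ∈ s)
    (ha : f a = g a) :
    EqOn f g (Ici a) := fun _ ht =>
  ODE_solution_unique_of_mem_Icc_right (fun τ _ => hv τ)
    (fun τ hτ => (hf τ hτ.1).continuousWithinAt.mono Icc_subset_Ici_self)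
    (fun τ hτ => (hf τ hτ.1).mono (Ici_subset_Ici.2 hτ.1)) (fun τ hτ => hfs τ hτ.1)
    (fun τ hτ => (hg τ hτ.1).continuousWithinAt.mono Icc_subset_Ici_self)
    (fun τ hτ => (hg τ hτ.1).mono (Ici_subset_Ici.2 hτ.1)) (fun τ hτ => hgs τ hτ.1)
    ha ⟨ht, le_rfl⟩

theorem image_le_const_of_deriv_neg_of_eq {f f' : ℝ → ℝ} {a B : ℝ}
    (hf : ∀ t ∈ Ici a, HasDerivWithinAt f (f' t) (Ici a) t) (ha : f a ≤ B)
    (hB : ∀ t ∈ Ici a, f t = B → f' t < 0) :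
    ∀ t ∈ Ici a, f t ≤ B := fun _ ht =>
  image_le_of_deriv_right_lt_deriv_boundary (B := fun _ => B)
    (fun τ hτ => (hf τ hτ.1).continuousWithinAt.mono Icc_subset_Ici_self)
    (fun τ hτ => (hf τ hτ.1).mono (Ici_subset_Ici.2 hτ.1)) ha (fun _ => hasDerivAt_const _ _)
    (fun τ hτ => hB τ hτ.1) ⟨ht, le_rfl⟩

variable [CompleteSpace E] {v : ℝ → E → E} {K : ℝ≥0} {C : ℝ}

theorem exists_eq_forall_mem_Icc_hasDerivWithinAt_of_norm_le (hv : ∀ t, LipschitzWith K (v t))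
    (hcont : ∀ x, Continuous (v · x)) (hC : ∀ t x, ‖v t x‖ ≤ C) (x₀ : E) {a b : ℝ} (hab : a ≤ b) :
    ∃ f : ℝ → E, f a = x₀ ∧ ∀ t ∈ Icc a b, HasDerivWithinAt f (v t (f t)) (Icc a b) t := by
  have hC0 : 0 ≤ C := (norm_nonneg _).trans (hC a x₀)
  have hPL : IsPicardLindelof v (tmin := a) (tmax := b) ⟨a, left_mem_Icc.2 hab⟩ x₀
      ⟨C * (b - a), by nlinarith⟩ 0 ⟨C, hC0⟩ K :=
    { lipschitzOnWith := fun t _ => (hv t).lipschitzOnWith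
      continuousOn := fun x _ => (hcont x).continuousOn
      norm_le := fun t _ x _ => hC t x
      mul_max_le := by simp [hab]; exact le_rfl }
  exact hPL.exists_eq_forall_mem_Icc_hasDerivWithinAt₀

theorem exists_eq_forall_mem_Ici_hasDerivWithinAt_of_norm_le (hv : ∀ t, LipschitzWith K (v t))
    (hcont : ∀ x, Continuous (v · x)) (hC : ∀ t x, ‖v t x‖ ≤ C) (x₀ : E) (a : ℝ) :
    ∃ u : ℝ → E, u a = x₀ ∧ ∀ t ∈ Ici a, HasDerivWithinAt u (v t (u t)) (Ici a) t := by
  choose! sol hsol₀ hsol using fun b (hab : a ≤ b) =>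
    exists_eq_forall_mem_Icc_hasDerivWithinAt_of_norm_le hv hcont hC x₀ hab
  have hagree : ∀ {b b'}, a ≤ b → b ≤ b' → EqOn (sol b) (sol b') (Icc a b) := fun hb hbb' =>
    ODE_solution_unique_Icc_of_le hv (hsol _ hb) (hsol _ (hb.trans hbb')) hbb'
      (by rw [hsol₀ _ hb, hsol₀ _ (hb.trans hbb')])
  have hglue : ∀ t ∈ Ici a, EqOn (fun s => sol (s + 1) s) (sol (t + 1)) (Icc a (t + 1)) := by
    intro t ht s hs
    rcases le_total (s + 1) (t + 1) with h | h
    · exact hagree (by linarith [hs.1]) h ⟨hs.1, by linarith⟩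
    · exact (hagree (by linarith [mem_Ici.1 ht]) h hs).symm
  refine ⟨fun s => sol (s + 1) s, hagree (by linarith) le_rfl ⟨le_rfl, by linarith⟩ |>.trans
    (hsol₀ _ (by linarith)), fun t ht => ?_⟩
  have hmem : t ∈ Icc a (t + 1) := ⟨ht, by linarith⟩
  have hnhds : Icc a (t + 1) ∈ 𝓝[Ici a] t := by
    rw [← Ici_inter_Iic]
    exact inter_mem_nhdsWithin _ (Iic_mem_nhds (lt_add_one t))
  rw [hglue t ht hmem]
  exact ((hsol _ (by linarith [mem_Ici.1 ht]) t hmem).mono_of_mem_nhdsWithin hnhds)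
    |>.congr_of_eventuallyEq (eventuallyEq_of_mem hnhds (hglue t ht)) (hglue t ht hmem)

end GlobalSolutions

section Truncation

def clampBox (K : ℝ) (p : ℝ × ℝ) : ℝ × ℝ :=
  (max (-K) (min K p.1), max (-K) (min K p.2))

lemma lipschitzWith_clampBox (K : ℝ) : LipschitzWith 1 (clampBox K) := by
  have h : LipschitzWith 1 fun a : ℝ => max (-K) (min K a) :=
    (LipschitzWith.id.const_min K).const_max (-K)
  have h₂ := (h.comp LipschitzWith.prod_fst).prodMk (h.comp LipschitzWith.prod_snd)
  rwa [mul_one, max_self] at h₂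

-- `ℝ × ℝ` carries the sup norm, so `closedBall 0 K` is the square `[-K, K]²`.
lemma clampBox_mem_closedBall {K : ℝ} (hK : 0 ≤ K) (p : ℝ × ℝ) :
    clampBox K p ∈ closedBall 0 K := by
  simp only [mem_closedBall_zero_iff, Prod.norm_def, clampBox, Real.norm_eq_abs, max_le_iff,
    abs_le]
  refine ⟨⟨?_, ?_⟩, ?_, ?_⟩ <;> simp [hK]

lemma clampBox_eq_self {K : ℝ} {p : ℝ × ℝ} (hp : p ∈ closedBall 0 K) : clampBox K p = p := by
  simp only [mem_closedBall_zero_iff, Prod.norm_def, Real.norm_eq_abs, max_le_iff, abs_le] at hp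
  simp [clampBox, hp]

theorem exists_eq_forall_mem_Ici_hasDerivWithinAt_comp_clampBox {v : ℝ → ℝ × ℝ → ℝ × ℝ} {K C : ℝ}
    {L : ℝ≥0} (hK : 0 ≤ K) (hv : ∀ t, LipschitzOnWith L (v t) (closedBall 0 K))
    (hcont : ∀ p, Continuous (v · p)) (hC : ∀ t, ‖v t 0‖ ≤ C) (p₀ : ℝ × ℝ) (a : ℝ) :
    ∃ u : ℝ → ℝ × ℝ, u a = p₀ ∧
      ∀ t ∈ Ici a, HasDerivWithinAt u (v t (clampBox K (u t))) (Ici a) t := by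
  have hmaps : MapsTo (clampBox K) univ (closedBall 0 K) :=
    fun p _ => clampBox_mem_closedBall hK p
  have hlip (t : ℝ) : LipschitzWith L fun p => v t (clampBox K p) := by
    simpa [Function.comp_def] using
      lipschitzOnWith_univ.1 ((hv t).comp (lipschitzWith_clampBox K).lipschitzOnWith hmaps)
  have hbdd (t : ℝ) (p : ℝ × ℝ) : ‖v t (clampBox K p)‖ ≤ C + L * K := by
    have hp := clampBox_mem_closedBall hK p
    have hdiff := (hv t).norm_sub_le hp (mem_closedBall_self hK)
    rw [sub_zero] at hdiff
    calc ‖v t (clampBox K p)‖ ≤ ‖v t 0‖ + ‖v t (clampBox K p) - v t 0‖ := norm_le_insert' _ _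
      _ ≤ C + L * K := add_le_add (hC t) (hdiff.trans (by gcongr; simpa using hp))
  exact exists_eq_forall_mem_Ici_hasDerivWithinAt_of_norm_le hlip (fun p => hcont _) hbdd p₀ a

end Truncation

section ProdDeriv

variable {𝕜 E F : Type*} [NontriviallyNormedField 𝕜] [NormedAddCommGroup E] [NormedSpace 𝕜 E]
  [NormedAddCommGroup F] [NormedSpace 𝕜 F] {z : 𝕜 → E × F} {d : E × F} {s : Set 𝕜} {t : 𝕜}

theorem HasDerivWithinAt.fst (hz : HasDerivWithinAt z d s t) :
    HasDerivWithinAt (fun τ => (z τ).1) d.1 s t := by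
  simpa using hz.hasFDerivWithinAt.fst.hasDerivWithinAt

theorem HasDerivWithinAt.snd (hz : HasDerivWithinAt z d s t) :
    HasDerivWithinAt (fun τ => (z τ).2) d.2 s t := by
  simpa using hz.hasFDerivWithinAt.snd.hasDerivWithinAt

end ProdDeriv

section Duffing

variable {γ A ω ε : ℝ}

noncomputable def duffingField (γ A ω t : ℝ) (p : ℝ × ℝ) : ℝ × ℝ :=
  (p.2, A * cos (ω * t) - γ * p.2 - p.1 - p.1 ^ 3)

lemma exists_lipschitzOnWith_duffingField (γ A ω K : ℝ) :
    ∃ L, ∀ t, LipschitzOnWith L (duffingField γ A ω t) (closedBall 0 K) := by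
  have hN : ContDiff ℝ 1 fun p : ℝ × ℝ => (p.2, -γ * p.2 - p.1 - p.1 ^ 3) := by fun_prop
  obtain ⟨L, hL⟩ := hN.contDiffOn.exists_lipschitzOnWith one_ne_zero (convex_closedBall 0 K)
    (isCompact_closedBall 0 K)
  -- the forcing only translates the field, which does not change its Lipschitz constant
  refine ⟨L, fun t p hp q hq => ?_⟩
  have hsplit (r : ℝ × ℝ) : duffingField γ A ω t r
      = (r.2, -γ * r.2 - r.1 - r.1 ^ 3) + (0, A * cos (ω * t)) := by
    ext
    · simp [duffingField]
    · simp [duffingField]; ring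
  simpa only [hsplit, edist_add_right] using hL hp hq

lemma norm_duffingField_zero_le (γ A ω t : ℝ) : ‖duffingField γ A ω t 0‖ ≤ |A| := by
  simpa [duffingField, abs_mul] using
    mul_le_of_le_one_right (abs_nonneg A) (abs_cos_le_one (ω * t))

lemma HasDerivWithinAt.prodMk_duffingField {y y' : ℝ → ℝ} {y'' : ℝ} {s : Set ℝ} {t : ℝ}
    (hy : HasDerivWithinAt y (y' t) s t) (hy' : HasDerivWithinAt y' y'' s t)
    (heq : y'' + γ * y' t + y t + y t ^ 3 = A * Real.cos (ω * t)) :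
    HasDerivWithinAt (fun s => (y s, y' s)) (duffingField γ A ω t (y t, y' t)) s t := by
  have hfield : duffingField γ A ω t (y t, y' t) = (y' t, y'') := by
    simp only [duffingField, Prod.mk.injEq, true_and]
    linarith
  exact hfield ▸ hy.prodMk hy'

-- Without the cross term `ε x v` the energy would only dissipate through `-γ v²`.
noncomputable def duffingEnergy (ε : ℝ) (p : ℝ × ℝ) : ℝ :=
  p.2 ^ 2 / 2 + p.1 ^ 2 / 2 + p.1 ^ 4 / 4 + ε * p.1 * p.2

lemma le_half_of_mul_one_add_sq_le (hεγ : ε * (1 + γ ^ 2) ≤ γ / 4) : ε ≤ 1 / 2 := by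
  nlinarith [sq_nonneg (γ - 1)]

lemma norm_le_of_duffingEnergy_le {B : ℝ} {p : ℝ × ℝ} (hε : 0 ≤ ε) (hε₂ : ε ≤ 1 / 2)
    (hp : duffingEnergy ε p ≤ B) : ‖p‖ ≤ √(4 * B) := by
  have h : p.1 ^ 2 + p.2 ^ 2 ≤ 4 * B := by
    unfold duffingEnergy at hp
    nlinarith [mul_nonneg hε (sq_nonneg (p.1 + p.2)), sq_nonneg p.1, sq_nonneg p.2,
      pow_nonneg (sq_nonneg p.1) 2]
  rw [Prod.norm_def, Real.norm_eq_abs, Real.norm_eq_abs]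
  exact max_le (Real.abs_le_sqrt (by nlinarith [sq_nonneg p.2]))
    (Real.abs_le_sqrt (by nlinarith [sq_nonneg p.1]))

lemma HasDerivWithinAt.duffingEnergy {z : ℝ → ℝ × ℝ} {d : ℝ × ℝ} {s : Set ℝ} {t : ℝ}
    (hz : HasDerivWithinAt z d s t) :
    HasDerivWithinAt (fun τ => duffingEnergy ε (z τ))
      (((z t).1 + (z t).1 ^ 3 + ε * (z t).2) * d.1 + ((z t).2 + ε * (z t).1) * d.2) s t := by
  have h₁ := hz.fst
  have h₂ := hz.snd
  refine (((((h₂.pow 2).div_const 2).add ((h₁.pow 2).div_const 2)).add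
    ((h₁.pow 4).div_const 4)).add ((h₁.const_mul ε).mul h₂)).congr_deriv ?_
  push_cast
  ring

lemma duffingEnergy_dissipation (hγ : 0 < γ) (hε : 0 < ε) (hεγ : ε * (1 + γ ^ 2) ≤ γ / 4)
    (t : ℝ) (p : ℝ × ℝ) :
    (p.1 + p.1 ^ 3 + ε * p.2) * (duffingField γ A ω t p).1
      + (p.2 + ε * p.1) * (duffingField γ A ω t p).2
      ≤ -(ε / 2) * duffingEnergy ε p + (A ^ 2 / γ + ε * A ^ 2) := by
  obtain ⟨x, v⟩ := p
  simp only [duffingField, duffingEnergy]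
  set θ := Real.cos (ω * t)
  have hθ : θ ^ 2 ≤ 1 := by nlinarith [Real.neg_one_le_cos (ω * t), Real.cos_le_one (ω * t)]
  have hε₂ := le_half_of_mul_one_add_sq_le hεγ
  -- Young's inequality for each cross term
  have h₁ : A * v * θ - γ / 4 * v ^ 2 ≤ A ^ 2 / γ := by
    rw [le_div_iff₀ hγ]
    nlinarith [sq_nonneg (γ * v - 2 * A * θ), mul_nonneg (sq_nonneg A) (sub_nonneg.2 hθ)]
  have h₂ : A * x * θ ≤ x ^ 2 / 4 + A ^ 2 := by
    nlinarith [sq_nonneg (x - 2 * A * θ), mul_nonneg (sq_nonneg A) (sub_nonneg.2 hθ)]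
  have h₃ : -(γ * x * v) ≤ x ^ 2 / 4 + γ ^ 2 * v ^ 2 := by
    nlinarith [sq_nonneg (x + 2 * γ * v)]
  have h₄ : ε ^ 2 / 2 * (x * v) ≤ ε / 8 * x ^ 2 + ε / 8 * v ^ 2 := by
    nlinarith [mul_nonneg (mul_nonneg hε.le hε.le) (sq_nonneg (x - v)),
      mul_nonneg (mul_nonneg hε.le (by linarith : (0:ℝ) ≤ 1 / 2 - ε))
        (add_nonneg (sq_nonneg x) (sq_nonneg v))]
  have h₅ : ε * v ^ 2 + ε * (γ ^ 2 * v ^ 2) ≤ γ / 4 * v ^ 2 := by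
    nlinarith [mul_le_mul_of_nonneg_right hεγ (sq_nonneg v)]
  nlinarith [mul_le_mul_of_nonneg_left h₂ hε.le, mul_le_mul_of_nonneg_left h₃ hε.le,
    mul_nonneg hε.le (pow_nonneg (sq_nonneg x) 2), mul_nonneg hε.le (sq_nonneg x),
    mul_nonneg hγ.le (sq_nonneg v), mul_nonneg hε.le (sq_nonneg v)]

theorem duffingEnergy_le_of_hasDerivWithinAt (hγ : 0 < γ) (hε : 0 < ε)
    (hεγ : ε * (1 + γ ^ 2) ≤ γ / 4) {F : ℝ → ℝ × ℝ → ℝ × ℝ} {z : ℝ → ℝ × ℝ} {a B : ℝ}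
    (hB : 2 * (A ^ 2 / γ + ε * A ^ 2) / ε < B)
    (hF : ∀ t p, duffingEnergy ε p = B → F t p = duffingField γ A ω t p)
    (hz : ∀ t ∈ Ici a, HasDerivWithinAt z (F t (z t)) (Ici a) t)
    (ha : duffingEnergy ε (z a) ≤ B) :
    ∀ t ∈ Ici a, duffingEnergy ε (z t) ≤ B := by
  refine image_le_const_of_deriv_neg_of_eq (fun t ht => (hz t ht).duffingEnergy) ha
    fun t _ hzt => ?_
  have hdiss := duffingEnergy_dissipation (A := A) (ω := ω) hγ hε hεγ t (z t)
  rw [div_lt_iff₀ hε] at hB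
  rw [hF t _ hzt]
  nlinarith

variable {B : ℝ}

theorem exists_eq_forall_mem_Ici_hasDerivWithinAt_duffingField (hγ : 0 < γ) (hε : 0 < ε)
    (hεγ : ε * (1 + γ ^ 2) ≤ γ / 4) (hB : 2 * (A ^ 2 / γ + ε * A ^ 2) / ε < B) {p₀ : ℝ × ℝ}
    (hp₀ : duffingEnergy ε p₀ ≤ B) (a : ℝ) :
    ∃ u : ℝ → ℝ × ℝ, u a = p₀ ∧
      ∀ t ∈ Ici a, HasDerivWithinAt u (duffingField γ A ω t (u t)) (Ici a) t := by
  have hball (p : ℝ × ℝ) (hp : duffingEnergy ε p ≤ B) : p ∈ closedBall 0 √(4 * B) :=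
    mem_closedBall_zero_iff.2 <|
      norm_le_of_duffingEnergy_le hε.le (le_half_of_mul_one_add_sq_le hεγ) hp
  obtain ⟨L, hL⟩ := exists_lipschitzOnWith_duffingField γ A ω √(4 * B)
  obtain ⟨u, hu₀, hu⟩ := exists_eq_forall_mem_Ici_hasDerivWithinAt_comp_clampBox
    (Real.sqrt_nonneg _) hL (fun p => by unfold duffingField; fun_prop)
    (norm_duffingField_zero_le γ A ω) p₀ a
  have huB := duffingEnergy_le_of_hasDerivWithinAt hγ hε hεγ hB
    (F := fun t p => duffingField γ A ω t (clampBox √(4 * B) p))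
    (fun t p hp => by rw [clampBox_eq_self (hball p hp.le)]) hu (hu₀ ▸ hp₀)
  exact ⟨u, hu₀, fun t ht => clampBox_eq_self (hball _ (huB t ht)) ▸ hu t ht⟩

theorem eqOn_Ici_of_hasDerivWithinAt_duffingField (hγ : 0 < γ) (hε : 0 < ε)
    (hεγ : ε * (1 + γ ^ 2) ≤ γ / 4) (hB : 2 * (A ^ 2 / γ + ε * A ^ 2) / ε < B)
    {z w : ℝ → ℝ × ℝ} {a : ℝ}
    (hz : ∀ t ∈ Ici a, HasDerivWithinAt z (duffingField γ A ω t (z t)) (Ici a) t)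
    (hw : ∀ t ∈ Ici a, HasDerivWithinAt w (duffingField γ A ω t (w t)) (Ici a) t)
    (ha : z a = w a) (hzB : duffingEnergy ε (z a) ≤ B) :
    EqOn z w (Ici a) := by
  have hball {u : ℝ → ℝ × ℝ} (hu : ∀ t ∈ Ici a, HasDerivWithinAt u (duffingField γ A ω t (u t))
      (Ici a) t) (huB : duffingEnergy ε (u a) ≤ B) (t : ℝ) (ht : t ∈ Ici a) :
      u t ∈ closedBall 0 √(4 * B) :=
    mem_closedBall_zero_iff.2 <|
      norm_le_of_duffingEnergy_le hε.le (le_half_of_mul_one_add_sq_le hεγ) <|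
      duffingEnergy_le_of_hasDerivWithinAt hγ hε hεγ hB (fun _ _ _ => rfl) hu huB t ht
  obtain ⟨L, hL⟩ := exists_lipschitzOnWith_duffingField γ A ω √(4 * B)
  exact ODE_solution_unique_of_mem_Ici hL hz (hball hz hzB) hw (hball hw (ha ▸ hzB)) ha

end Duffing

theorem duffing_global_existence_uniqueness_bounded_general (γ A ω x₀ v₀ : ℝ)
    (hγ : 0 < γ) :
    ∃ x x' x'' : ℝ → ℝ,
      (∀ t ∈ Ici (0:ℝ), HasDerivWithinAt x (x' t) (Ici 0) t) ∧
      (∀ t ∈ Ici (0:ℝ), HasDerivWithinAt x' (x'' t) (Ici 0) t) ∧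
      x 0 = x₀ ∧ x' 0 = v₀ ∧
      (∀ t ∈ Ici (0:ℝ), x'' t + γ * x' t + x t + (x t) ^ 3 = A * Real.cos (ω * t)) ∧
      (∃ M : ℝ, ∀ t ∈ Ici (0:ℝ), |x t| + |x' t| ≤ M) ∧
      (∀ y y' y'' : ℝ → ℝ,
        (∀ t ∈ Ici (0:ℝ), HasDerivWithinAt y (y' t) (Ici 0) t) →
        (∀ t ∈ Ici (0:ℝ), HasDerivWithinAt y' (y'' t) (Ici 0) t) →
        y 0 = x₀ → y' 0 = v₀ →
        (∀ t ∈ Ici (0:ℝ), y'' t + γ * y' t + y t + (y t) ^ 3 = A * Real.cos (ω * t)) →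
        ∀ t ∈ Ici (0:ℝ), y t = x t ∧ y' t = x' t) := by
  set ε := γ / (4 * (1 + γ ^ 2))
  have hε : 0 < ε := by positivity
  have hεγ : ε * (1 + γ ^ 2) ≤ γ / 4 :=
    (div_mul_eq_mul_div _ _ _).trans_le (mul_div_mul_right _ _ (by positivity)).le
  set B := max (duffingEnergy ε (x₀, v₀)) (2 * (A ^ 2 / γ + ε * A ^ 2) / ε + 1)
  have hB : 2 * (A ^ 2 / γ + ε * A ^ 2) / ε < B := (lt_add_one _).trans_le (le_max_right _ _)
  obtain ⟨u, hu₀, hu⟩ := exists_eq_forall_mem_Ici_hasDerivWithinAt_duffingField (ω := ω)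
    hγ hε hεγ hB (le_max_left _ _) 0
  have hu₀B : duffingEnergy ε (u 0) ≤ B := hu₀ ▸ le_max_left _ _
  have huB := duffingEnergy_le_of_hasDerivWithinAt hγ hε hεγ hB (fun _ _ _ => rfl) hu hu₀B
  refine ⟨fun t => (u t).1, fun t => (u t).2, fun t => (duffingField γ A ω t (u t)).2,
    fun t ht => (hu t ht).fst, fun t ht => (hu t ht).snd, by simp [hu₀], by simp [hu₀],
    fun t _ => by simp only [duffingField]; ring, ⟨2 * √(4 * B), fun t ht => ?_⟩, ?_⟩
  · have := norm_le_of_duffingEnergy_le hε.le (le_half_of_mul_one_add_sq_le hεγ) (huB t ht)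
    linarith [norm_fst_le (u t), norm_snd_le (u t), Real.norm_eq_abs (u t).1,
      Real.norm_eq_abs (u t).2]
  intro y y' y'' hy hy' hy₀ hy'₀ hyeq t ht
  have hyu := eqOn_Ici_of_hasDerivWithinAt_duffingField hγ hε hεγ hB
    (fun t ht => (hy t ht).prodMk_duffingField (hy' t ht) (hyeq t ht)) hu
    (by simp [hy₀, hy'₀, hu₀]) (by simp [hy₀, hy'₀, B]) ht
  exact Prod.ext_iff.1 hyu

/-- For `γ > 0`, every initial condition `(x₀, v₀)` gives rise to a unique
twice differentiable solution `x : [0, ∞) → ℝ` of the forced, damped Duffing equation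
`x'' + γ x' + x + x³ = A cos(ω t)`, and this solution is bounded:
`sup_{t ≥ 0} (|x(t)| + |x'(t)|) < ∞` (no finite-time blowup; all trajectories remain
bounded). -/
theorem duffing_global_existence_uniqueness_bounded (γ A ω x₀ v₀ : ℝ)
    (hγ : 0 < γ) (hω : 0 < ω) :
    ∃ x x' x'' : ℝ → ℝ,
      (∀ t ∈ Ici (0:ℝ), HasDerivWithinAt x (x' t) (Ici 0) t) ∧
      (∀ t ∈ Ici (0:ℝ), HasDerivWithinAt x' (x'' t) (Ici 0) t) ∧
      x 0 = x₀ ∧ x' 0 = v₀ ∧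
      (∀ t ∈ Ici (0:ℝ), x'' t + γ * x' t + x t + (x t) ^ 3 = A * Real.cos (ω * t)) ∧
      (∃ M : ℝ, ∀ t ∈ Ici (0:ℝ), |x t| + |x' t| ≤ M) ∧
      (∀ y y' y'' : ℝ → ℝ,
        (∀ t ∈ Ici (0:ℝ), HasDerivWithinAt y (y' t) (Ici 0) t) →
        (∀ t ∈ Ici (0:ℝ), HasDerivWithinAt y' (y'' t) (Ici 0) t) →
        y 0 = x₀ → y' 0 = v₀ →
        (∀ t ∈ Ici (0:ℝ), y'' t + γ * y' t + y t + (y t) ^ 3 = A * Real.cos (ω * t)) →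
        ∀ t ∈ Ici (0:ℝ), y t = x t ∧ y' t = x' t) :=
  duffing_global_existence_uniqueness_bounded_general γ A ω x₀ v₀ hγ
end

section
/- Let γ > 0. Every twice differentiable solution x : [0, ∞) → ℝ of the unforced, damped Duffing equation x''(t) + γ x'(t) + x(t) + x(t)³ = 0 satisfies (x(t), x'(t)) → (0, 0) as t → ∞. In particular, the unforced damped Duffing oscillator has no nonconstant periodic solutions. -/
open Real Set Filter Topology

/-!
The perturbed energy `V = x'²/2 + x²/2 + x⁴/4 + ε x x'` is, for `ε = γ / (γ² + 4)`, a strict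
Lyapunov function: along solutions `V' ≤ -ε V`. Grönwall gives `V(t) ≤ V(0) e^{-εt}`, and since
`V` dominates `(x² + x'²)/4`, the state decays exponentially to the origin. A periodic solution
that tends to `0` must vanish identically.
-/

theorem quadratic_form_nonneg_of_discrim_nonpos {a b c : ℝ} (ha : 0 ≤ a) (hc : 0 ≤ c)
    (hdisc : discrim a b c ≤ 0) (u v : ℝ) : 0 ≤ a * u ^ 2 + b * u * v + c * v ^ 2 := by
  rw [discrim, sub_nonpos] at hdisc
  rcases ha.eq_or_lt with rfl | ha
  · obtain rfl : b = 0 := by nlinarith [sq_nonneg b]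
    nlinarith [sq_nonneg v]
  · have : 0 ≤ 4 * a * (a * u ^ 2 + b * u * v + c * v ^ 2) := by
      nlinarith [sq_nonneg (2 * a * u + b * v), sq_nonneg v]
    nlinarith

theorem le_mul_exp_of_hasDerivWithinAt_le_mul {f f' : ℝ → ℝ} {K a : ℝ}
    (hf : ∀ t ∈ Ici a, HasDerivWithinAt f (f' t) (Ici a) t)
    (hbound : ∀ t ∈ Ici a, f' t ≤ K * f t) {t : ℝ} (ht : a ≤ t) :
    f t ≤ f a * exp (K * (t - a)) := by
  have hright : ∀ s ∈ Ici a, HasDerivWithinAt f (f' s) (Ici s) s := fun s hs =>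
    (hf s hs).mono (Ici_subset_Ici.2 hs)
  rw [← gronwallBound_ε0]
  exact le_gronwallBound_of_liminf_deriv_right_le
    (fun s hs => (hf s hs.1).continuousWithinAt.mono Icc_subset_Ici_self)
    (fun s hs _ hr => (hright s hs.1).liminf_right_slope_le hr) le_rfl
    (fun s hs => by simpa using hbound s hs.1) t ⟨ht, le_rfl⟩

theorem tendsto_prodMk_zero_of_sq_add_sq_le {α : Type*} {l : Filter α} {f g b : α → ℝ}
    (hb : Tendsto b l (𝓝 0)) (hle : ∀ᶠ s in l, f s ^ 2 + g s ^ 2 ≤ b s) :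
    Tendsto (fun s => (f s, g s)) l (𝓝 (0, 0)) := by
  refine squeeze_zero_norm' ?_ (by simpa using hb.sqrt)
  filter_upwards [hle] with s hs
  exact max_le (abs_le_sqrt (by nlinarith [sq_nonneg (g s)]))
    (abs_le_sqrt (by nlinarith [sq_nonneg (f s)]))

theorem eq_of_tendsto_of_add_eq {f : ℝ → ℝ} {T L : ℝ} (hT : 0 < T)
    (hper : ∀ t ∈ Ici (0:ℝ), f (t + T) = f t) (hf : Tendsto f atTop (𝓝 L)) {t : ℝ}
    (ht : 0 ≤ t) : f t = L := by
  have hiter : ∀ n : ℕ, f (t + n * T) = f t := by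
    intro n
    induction n with
    | zero => simp
    | succ n ih =>
      rw [Nat.cast_succ, add_one_mul, ← add_assoc, hper _ (mem_Ici.2 (by positivity)), ih]
  have hlim : Tendsto (fun n : ℕ => f (t + n * T)) atTop (𝓝 L) :=
    hf.comp (tendsto_atTop_add_const_left _ t
      (tendsto_natCast_atTop_atTop.atTop_mul_const hT))
  simp only [hiter] at hlim
  exact tendsto_nhds_unique tendsto_const_nhds hlim

noncomputable def duffingLyapunov (ε x v : ℝ) : ℝ :=
  v ^ 2 / 2 + x ^ 2 / 2 + x ^ 4 / 4 + ε * x * v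

theorem sq_add_sq_le_four_mul_duffingLyapunov {ε : ℝ} (hε : |ε| ≤ 1 / 2) (x v : ℝ) :
    x ^ 2 + v ^ 2 ≤ 4 * duffingLyapunov ε x v := by
  obtain ⟨hε₁, hε₂⟩ := abs_le.1 hε
  unfold duffingLyapunov
  nlinarith [sq_nonneg (x ^ 2), mul_nonneg (by linarith : (0:ℝ) ≤ 1 / 2 - ε) (sq_nonneg (x + v)),
    mul_nonneg (by linarith : (0:ℝ) ≤ 1 / 2 + ε) (sq_nonneg (x - v))]

theorem HasDerivWithinAt.duffingLyapunov {x x' v v' : ℝ → ℝ} {s : Set ℝ} {t : ℝ} (ε : ℝ)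
    (hx : HasDerivWithinAt x (x' t) s t) (hv : HasDerivWithinAt v (v' t) s t) :
    HasDerivWithinAt (fun t => duffingLyapunov ε (x t) (v t))
      (v t * v' t + (x t + x t ^ 3) * x' t + ε * (x' t * v t + x t * v' t)) s t := by
  have := ((((hv.pow 2).div_const 2).add ((hx.pow 2).div_const 2)).add
    ((hx.pow 4).div_const 4)).add ((hx.const_mul ε).mul hv)
  refine this.congr_deriv ?_
  push_cast
  ring

theorem duffingLyapunov_deriv_le {γ ε : ℝ} (hε : 0 ≤ ε) (hεγ : ε * (γ ^ 2 + 3) ≤ 2 * γ)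
    (x v : ℝ) :
    v * (-(γ * v) - x - x ^ 3) + (x + x ^ 3) * v + ε * (v * v + x * (-(γ * v) - x - x ^ 3))
      ≤ -ε * duffingLyapunov ε x v := by
  have h3ε : 3 * ε ≤ 2 * γ := by nlinarith [sq_nonneg γ]
  have hdisc : discrim (γ - 3 * ε / 2) (ε * (γ - ε)) (ε / 2) ≤ 0 := by
    have : (γ - ε) ^ 2 ≤ γ ^ 2 := by nlinarith
    have : ε * (γ - ε) ^ 2 ≤ 2 * γ - 3 * ε := by nlinarith
    rw [discrim]
    nlinarith
  -- the difference of the two sides is this quadratic form plus `(3ε/4) x⁴`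
  have hquad := quadratic_form_nonneg_of_discrim_nonpos (by linarith) (by linarith) hdisc v x
  unfold duffingLyapunov
  nlinarith [mul_nonneg hε (sq_nonneg (x ^ 2))]

/-- For `γ > 0`, every twice differentiable solution of the unforced,
damped Duffing equation `x'' + γ x' + x + x³ = 0` on `[0, ∞)` satisfies
`(x(t), x'(t)) → (0, 0)` as `t → ∞`; in particular the unforced damped Duffing oscillator
has no nonconstant periodic solutions. -/
theorem duffing_damped_unforced_decay (γ : ℝ) (hγ : 0 < γ) (x x' x'' : ℝ → ℝ)
    (hx1 : ∀ t ∈ Ici (0:ℝ), HasDerivWithinAt x (x' t) (Ici 0) t)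
    (hx2 : ∀ t ∈ Ici (0:ℝ), HasDerivWithinAt x' (x'' t) (Ici 0) t)
    (hode : ∀ t ∈ Ici (0:ℝ), x'' t + γ * x' t + x t + (x t) ^ 3 = 0) :
    Tendsto (fun t => (x t, x' t)) atTop (𝓝 (0, 0)) ∧
      ∀ T > 0, (∀ t ∈ Ici (0:ℝ), x (t + T) = x t) → ∀ t ∈ Ici (0:ℝ), x t = x 0 := by
  set ε := γ / (γ ^ 2 + 4)
  have hε : 0 < ε := by positivity
  have hε_half : |ε| ≤ 1 / 2 := by
    rw [abs_of_pos hε, div_le_iff₀ (by positivity)]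
    nlinarith [sq_nonneg (γ - 1)]
  have hεγ : ε * (γ ^ 2 + 3) ≤ 2 * γ := by
    rw [div_mul_eq_mul_div, div_le_iff₀ (by positivity)]
    nlinarith
  set V := fun t => duffingLyapunov ε (x t) (x' t)
  have hV_le : ∀ t ∈ Ici (0:ℝ), V t ≤ V 0 * exp (-ε * (t - 0)) := fun t ht =>
    le_mul_exp_of_hasDerivWithinAt_le_mul (fun s hs => (hx1 s hs).duffingLyapunov ε (hx2 s hs))
      (fun s hs => by
        rw [show x'' s = -(γ * x' s) - x s - x s ^ 3 by linarith [hode s hs]]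
        exact duffingLyapunov_deriv_le hε.le hεγ _ _) ht
  have hbound_lim : Tendsto (fun t => 4 * (V 0 * exp (-ε * (t - 0)))) atTop (𝓝 0) := by
    simpa using ((tendsto_exp_neg_atTop_nhds_zero.comp
      (tendsto_id.const_mul_atTop hε)).const_mul (V 0)).const_mul 4
  have hlim : Tendsto (fun t => (x t, x' t)) atTop (𝓝 (0, 0)) :=
    tendsto_prodMk_zero_of_sq_add_sq_le hbound_lim <|
      (eventually_ge_atTop 0).mono fun t ht =>
        (sq_add_sq_le_four_mul_duffingLyapunov hε_half _ _).trans (by gcongr; exact hV_le t ht)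
  have hx_lim : Tendsto x atTop (𝓝 0) := (continuous_fst.tendsto _).comp hlim
  refine ⟨hlim, fun T hT hper t ht => ?_⟩
  rw [eq_of_tendsto_of_add_eq hT hper hx_lim ht, eq_of_tendsto_of_add_eq hT hper hx_lim le_rfl]
end
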